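/- Let r ≥ 0 and let S = (U,σ) be a structure over a signature Σ with infinite universe U. Let S^{2^r} = (Dom(σ) ∪ {v_1,…,v_{2^r}}, σ) be the finite structure obtained by restricting the universe to Dom(σ) together with 2^r pairwise distinct fresh elements v_1,…,v_{2^r} ∈ U ∖ Dom(σ), keeping the same interpretation σ. Then type_r(S) = type_r(S^{2^r}). -/

import Mathlib

set_option maxHeartbeats 800000

/-- A finite relational signature with constant symbols. -/
structure Signature where
  Rel : Type
  arity : Rel → ℕ
  Const : Type
  finRel : Finite Rel
  finConst : Finite Const

/-- An interpretation of the signature `Sg` in the universe `U`: each relation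
symbol is mapped to a finite set of tuples and each constant to an element. -/
structure Interp (Sg : Signature) (U : Type) where
  rel : (R : Sg.Rel) → Set (Fin (Sg.arity R) → U)
  rel_finite : ∀ R, (rel R).Finite
  const : Sg.Const → U

/-- A structure over `(Σ,𝔇)`: an interpretation of `Σ` together with the
interpretation of the distinguished unary relation symbol `𝔇`. -/
structure InterpD (Sg : Signature) (U : Type) extends Interp Sg U where
  D : Set U
  D_finite : D.Finite

/-- The set `Rel(σ)` of elements occurring in some tuple of some relation. -/
def RelSet {Sg : Signature} {U : Type} (σ : Interp Sg U) : Set U :=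
  {u | ∃ (R : Sg.Rel) (g : Fin (Sg.arity R) → U), g ∈ σ.rel R ∧ ∃ i, g i = u}

/-- The domain `Dom(σ)`: elements occurring in relations or denoted by constants. -/
def Interp.domSet {Sg : Signature} {U : Type} (σ : Interp Sg U) : Set U :=
  RelSet σ ∪ Set.range σ.const

/-- A structure is guarded iff every element occurring in a relation tuple
belongs to `σ(𝔇)`. -/
def InterpD.Guarded {Sg : Signature} {U : Type} (σ : InterpD Sg U) : Prop :=
  RelSet σ.toInterp ⊆ σ.D

/-- A finite rooted tree, given by a parent function. -/
structure RTree where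
  N : Type
  finN : Finite N
  root : N
  parent : N → N
  parent_root : parent root = root
  reach : ∀ n, ∃ m : ℕ, parent^[m] n = root

/-- `m` is a child of `n`. -/
def RTree.IsChild (T : RTree) (m n : T.N) : Prop := T.parent m = n ∧ m ≠ n

/-- A leaf is a node with no children. -/
def RTree.IsLeaf (T : RTree) (n : T.N) : Prop := ∀ m, ¬ T.IsChild m n

/-- `n` is a descendant of `m` (belongs to the subtree rooted at `m`). -/
def RTree.Desc (T : RTree) (n m : T.N) : Prop := ∃ j : ℕ, T.parent^[j] n = m

/-- The set `S` of nodes induces a connected subtree. -/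
def RTree.ConnSubtree (T : RTree) (S : Set T.N) : Prop :=
  S.Nonempty → ∃ t ∈ S, ∀ n ∈ S, ∃ m : ℕ,
    T.parent^[m] n = t ∧ ∀ j ≤ m, T.parent^[j] n ∈ S

/-- A tree decomposition of the structure given by the interpretation `σ`
(and, in the `(Σ,𝔇)` case, the interpretation `D` of the unary symbol `𝔇`;
for structures over a plain signature take `D = ∅`). -/
structure TreeDecomp {Sg : Signature} {U : Type} (σ : Interp Sg U) (D : Set U) where
  tree : RTree
  bag : tree.N → Finset U
  covers : ∀ (R : Sg.Rel) (g : Fin (Sg.arity R) → U), g ∈ σ.rel R → ∃ n, ∀ i, g i ∈ bag n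
  coversD : ∀ u ∈ D, ∃ n, u ∈ bag n
  conn : ∀ u : U, tree.ConnSubtree {n | u ∈ bag n}

/-- The width of a tree decomposition: `max_n |λ(n)| - 1`. -/
noncomputable def TreeDecomp.width {Sg : Signature} {U : Type} {σ : Interp Sg U} {D : Set U}
    (T : TreeDecomp σ D) : ℕ :=
  (⨆ n, (T.bag n).card) - 1

/-- A leaf `n` witnesses the tuple `t.2 ∈ σ(t.1)` iff its bag contains all
elements of the tuple. -/
def TreeDecomp.Witnesses {Sg : Signature} {U : Type} {σ : Interp Sg U} {D : Set U}
    (T : TreeDecomp σ D) (n : T.tree.N) (t : (R : Sg.Rel) × (Fin (Sg.arity R) → U)) : Prop :=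
  t.2 ∈ σ.rel t.1 ∧ ∀ i, t.2 i ∈ T.bag n

/-- A tree decomposition of width `k` is reduced (Def. of reduced tree decompositions). -/
def TreeDecomp.IsReduced {Sg : Signature} {U : Type} {σ : Interp Sg U} {D : Set U}
    (k : ℕ) (T : TreeDecomp σ D) : Prop :=
  -- (1) every tuple has a witnessing leaf
  (∀ (R : Sg.Rel) (g : Fin (Sg.arity R) → U), g ∈ σ.rel R →
      ∃ n, T.tree.IsLeaf n ∧ T.Witnesses n ⟨R, g⟩) ∧
  -- (2) each leaf witnesses exactly one tuple
  (∀ n, T.tree.IsLeaf n → ∃! t : (R : Sg.Rel) × (Fin (Sg.arity R) → U), T.Witnesses n t) ∧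
  -- (3) each node has at most two children
  (∀ n m₁ m₂ m₃ : T.tree.N, T.tree.IsChild m₁ n → T.tree.IsChild m₂ n → T.tree.IsChild m₃ n →
      m₁ = m₂ ∨ m₁ = m₃ ∨ m₂ = m₃) ∧
  -- (4) the two children of a binary node carry the same bag as their parent
  (∀ n m₁ m₂ : T.tree.N, T.tree.IsChild m₁ n → T.tree.IsChild m₂ n → m₁ ≠ m₂ →
      T.bag n = T.bag m₁ ∧ T.bag n = T.bag m₂) ∧
  -- (5) all bags have exactly k+1 elements
  (∀ n, (T.bag n).card = k + 1) ∧
  -- (6) a unary node agrees with its child, or they differ by exactly one element each way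
  (∀ n m : T.tree.N, T.tree.IsChild m n → (∀ m', T.tree.IsChild m' n → m' = m) →
      T.bag n = T.bag m ∨
        (((T.bag n : Set U) \ (T.bag m : Set U)).ncard = 1 ∧
         ((T.bag m : Set U) \ (T.bag n : Set U)).ncard = 1))

/-- Tree decompositions of a structure over `(Σ,𝔇)`. -/
abbrev TreeDecompD {Sg : Signature} {U : Type} (σ : InterpD Sg U) :=
  TreeDecomp σ.toInterp σ.D
/-- Formulas of the separation logic of relations `SLR` over the signature
`(Σ,𝔇)`, with predicate symbols from `P` (of arities `ar`); first-order
variables are natural numbers. -/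
inductive SLRForm (Sg : Signature) (P : Type) (ar : P → ℕ) : Type
  | rel (R : Sg.Rel) (args : Fin (Sg.arity R) → ℕ)
  | datom (y : ℕ)
  | pred (p : P) (args : Fin (ar p) → ℕ)
  | star (φ ψ : SLRForm Sg P ar)
  | ex (y : ℕ) (φ : SLRForm Sg P ar)

/-- A set of inductive definitions (SID): a set of rules `p(x_0,…,x_{ar p - 1}) ← ρ`
for each predicate symbol `p`; the body `ρ` uses the variables `0,…,ar p - 1` as
formal parameters. -/
structure SID (Sg : Signature) where
  P : Type
  ar : P → ℕ
  rules : (p : P) → Set (SLRForm Sg P ar)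

/-- An SID is finite: finitely many predicates and finitely many rules. -/
def SID.IsFinite {Sg : Signature} (Δ : SID Sg) : Prop :=
  Finite Δ.P ∧ ∀ p, (Δ.rules p).Finite

/-- `σ` is the composition `σ₁ • σ₂` of two structures with the same universe and
agreeing constant interpretations: all relations (including `𝔇`) are disjoint
and interpreted by unions. -/
def IsUnionD {Sg : Signature} {U : Type} (σ σ₁ σ₂ : InterpD Sg U) : Prop :=
  σ₁.const = σ₂.const ∧ σ.const = σ₁.const ∧
  (∀ R, σ₁.rel R ∩ σ₂.rel R = ∅ ∧ σ.rel R = σ₁.rel R ∪ σ₂.rel R) ∧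
  σ₁.D ∩ σ₂.D = ∅ ∧ σ.D = σ₁.D ∪ σ₂.D

/-- The satisfaction relation `(U,σ) ⊨ν_Δ φ` of SLR. -/
inductive SLRSat {Sg : Signature} {U : Type} (Δ : SID Sg) :
    InterpD Sg U → (ℕ → U) → SLRForm Sg Δ.P Δ.ar → Prop where
  | rel {σ : InterpD Sg U} {ν : ℕ → U} {R : Sg.Rel} {args : Fin (Sg.arity R) → ℕ}
      (h1 : σ.rel R = {fun i => ν (args i)})
      (h2 : ∀ R', R' ≠ R → σ.rel R' = ∅)
      (h3 : σ.D = ∅) :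
      SLRSat Δ σ ν (.rel R args)
  | datom {σ : InterpD Sg U} {ν : ℕ → U} {y : ℕ}
      (h1 : σ.D = {ν y}) (h2 : ∀ R, σ.rel R = ∅) :
      SLRSat Δ σ ν (.datom y)
  | star {σ σ₁ σ₂ : InterpD Sg U} {ν : ℕ → U} {φ ψ : SLRForm Sg Δ.P Δ.ar}
      (h : IsUnionD σ σ₁ σ₂) (hφ : SLRSat Δ σ₁ ν φ) (hψ : SLRSat Δ σ₂ ν ψ) :
      SLRSat Δ σ ν (.star φ ψ)
  | ex {σ : InterpD Sg U} {ν : ℕ → U} {y : ℕ} {φ : SLRForm Sg Δ.P Δ.ar} (v : U)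
      (h : SLRSat Δ σ (Function.update ν y v) φ) :
      SLRSat Δ σ ν (.ex y φ)
  | pred {σ : InterpD Sg U} {ν : ℕ → U} {p : Δ.P} {args : Fin (Δ.ar p) → ℕ}
      {ρ : SLRForm Sg Δ.P Δ.ar} (ν' : ℕ → U)
      (hρ : ρ ∈ Δ.rules p) (hν : ∀ i : Fin (Δ.ar p), ν' i.1 = ν (args i))
      (h : SLRSat Δ σ ν' ρ) :
      SLRSat Δ σ ν (.pred p args)

/-- The SID `Δ_tw^k` defining the guarded structures of treewidth at most `k`.
The predicate `A` of arity `k+1` is encoded by `true`, the nullary predicate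
`A_k` by `false`; parameters `x_1,…,x_{k+1}` are the variables `0,…,k`. -/
def twSID (Sg : Signature) (k : ℕ) : SID Sg where
  P := Bool
  ar := fun b => cond b (k+1) 0
  rules := fun b =>
    if b then
      -- (1)  A(x₁,…,x_{k+1}) ← A(x₁,…,x_{k+1}) * A(x₁,…,x_{k+1})
      {SLRForm.star (.pred true fun i => i.1) (.pred true fun i => i.1)} ∪
      -- (2)  A(x₁,…,x_{k+1}) ← ∃y. 𝔇(y) * A(x₁,…,x_{k+1})[xᵢ/y]
      (⋃ i : Fin (k+1),
        {SLRForm.ex (k+1) (.star (.datom (k+1))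
          (.pred true (fun j : Fin (k+1) => if j = i then (k+1 : ℕ) else j.1)))}) ∪
      -- (3)  A(x₁,…,x_{k+1}) ← R(y₁,…,y_{#R}),  y's among x₁,…,x_{k+1}
      {ρ | ∃ (R : Sg.Rel) (f : Fin (Sg.arity R) → Fin (k+1)),
          ρ = SLRForm.rel R (fun a => (f a).1)}
    else
      -- (4)  A_k() ← ∃x₁…∃x_{k+1}. 𝔇(x₁) * … * 𝔇(x_{k+1}) * A(x₁,…,x_{k+1})
      {(List.range (k+1)).foldr (fun i acc => SLRForm.ex i acc)
        ((List.range (k+1)).foldr (fun i acc => SLRForm.star (.datom i) acc)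
          (SLRForm.pred true (fun i => i.1)))}
/-- The signature `Σ ∪ Π` obtained by adding `k` fresh constants (ports). -/
abbrev Signature.addConsts (Sg : Signature) (k : ℕ) : Signature where
  Rel := Sg.Rel
  arity := Sg.arity
  Const := Sg.Const ⊕ Fin k
  finRel := Sg.finRel
  finConst := by haveI := Sg.finConst; exact inferInstance

/-- The signature `(Σ,𝔇)` seen as an ordinary signature: `𝔇` (encoded as `none`)
is a fresh unary relation symbol. -/
abbrev Signature.addD (Sg : Signature) : Signature where
  Rel := Option Sg.Rel
  arity := fun R => R.elim 1 Sg.arity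
  Const := Sg.Const
  finRel := by
    haveI := Sg.finRel
    exact Finite.of_equiv (Sg.Rel ⊕ PUnit.{1}) (Equiv.optionEquivSumPUnit.{0,0} Sg.Rel).symm
  finConst := Sg.finConst

/-- View a structure over `(Σ,𝔇)` as an ordinary structure over `Σ ∪ {𝔇}`. -/
def InterpD.toFull {Sg : Signature} {U : Type} (σ : InterpD Sg U) : Interp Sg.addD U where
  rel := fun R =>
    match R with
    | none => (fun (u : U) (_ : Fin 1) => u) '' σ.D
    | some r => σ.rel r
  rel_finite := fun R => by
    match R with
    | none => exact σ.D_finite.image _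
    | some r => exact σ.rel_finite r
  const := σ.const
/-- Monadic second-order formulas over the signature `Sg`: first-order terms are
variables (naturals) or constants, set variables are naturals. -/
inductive MSO (Sg : Signature) : Type
  | rel (R : Sg.Rel) (args : Fin (Sg.arity R) → ℕ ⊕ Sg.Const)
  | eq (t₁ t₂ : ℕ ⊕ Sg.Const)
  | mem (t : ℕ ⊕ Sg.Const) (X : ℕ)
  | not (φ : MSO Sg)
  | and (φ ψ : MSO Sg)
  | exFO (y : ℕ) (φ : MSO Sg)
  | exSO (Y : ℕ) (φ : MSO Sg)

/-- The quantifier rank of an MSO formula. -/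
def MSO.qr {Sg : Signature} : MSO Sg → ℕ
  | .rel _ _ => 0
  | .eq _ _ => 0
  | .mem _ _ => 0
  | .not φ => φ.qr
  | .and φ ψ => max φ.qr ψ.qr
  | .exFO _ φ => φ.qr + 1
  | .exSO _ φ => φ.qr + 1

/-- Free first-order variables. -/
def MSO.fvFO {Sg : Signature} : MSO Sg → Set ℕ
  | .rel _ args => {n | ∃ i, args i = Sum.inl n}
  | .eq t₁ t₂ => {n | t₁ = Sum.inl n ∨ t₂ = Sum.inl n}
  | .mem t _ => {n | t = Sum.inl n}
  | .not φ => φ.fvFO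
  | .and φ ψ => φ.fvFO ∪ ψ.fvFO
  | .exFO y φ => φ.fvFO \ {y}
  | .exSO _ φ => φ.fvFO

/-- Free set variables. -/
def MSO.fvSO {Sg : Signature} : MSO Sg → Set ℕ
  | .rel _ _ => ∅
  | .eq _ _ => ∅
  | .mem _ X => {X}
  | .not φ => φ.fvSO
  | .and φ ψ => φ.fvSO ∪ ψ.fvSO
  | .exFO _ φ => φ.fvSO
  | .exSO Y φ => φ.fvSO \ {Y}

/-- A sentence is a closed formula. -/
def MSO.IsSentence {Sg : Signature} (φ : MSO Sg) : Prop := φ.fvFO = ∅ ∧ φ.fvSO = ∅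

/-- Value of a term under a first-order assignment. -/
def termVal {Sg : Signature} {U : Type} (σ : Interp Sg U) (ν : ℕ → U) : ℕ ⊕ Sg.Const → U :=
  Sum.elim ν σ.const

/-- MSO satisfaction, under a first-order assignment `ν` and set assignment `μ`. -/
def MSOSat {Sg : Signature} {U : Type} (σ : Interp Sg U) :
    (ℕ → U) → (ℕ → Set U) → MSO Sg → Prop
  | ν, _, .rel R args => (fun i => termVal σ ν (args i)) ∈ σ.rel R
  | ν, _, .eq t₁ t₂ => termVal σ ν t₁ = termVal σ ν t₂
  | ν, μ, .mem t X => termVal σ ν t ∈ μ X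
  | ν, μ, .not φ => ¬ MSOSat σ ν μ φ
  | ν, μ, .and φ ψ => MSOSat σ ν μ φ ∧ MSOSat σ ν μ ψ
  | ν, μ, .exFO y φ => ∃ v : U, MSOSat σ (Function.update ν y v) μ φ
  | ν, μ, .exSO Y φ => ∃ V : Set U, MSOSat σ ν (Function.update μ Y V) φ

/-- A structure satisfies a sentence (notation `S ⊩ φ`). -/
def Interp.Models {Sg : Signature} {U : Type} (σ : Interp Sg U) (φ : MSO Sg) : Prop :=
  ∀ (ν : ℕ → U) (μ : ℕ → Set U), MSOSat σ ν μ φ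

/-- The `r`-type of a structure: the set of sentences of quantifier rank at most
`r` that it satisfies. -/
def Interp.typeAt {Sg : Signature} {U : Type} (σ : Interp Sg U) (r : ℕ) : Set (MSO Sg) :=
  {φ | φ.IsSentence ∧ φ.qr ≤ r ∧ σ.Models φ}

/-- The `r`-type of a structure over `(Σ,𝔇)`: sentences over `Σ ∪ {𝔇}`. -/
def InterpD.typeAt {Sg : Signature} {U : Type} (σ : InterpD Sg U) (r : ℕ) :
    Set (MSO Sg.addD) :=
  σ.toFull.typeAt r

/-- A structure over `(Σ,𝔇)` , bundled with its universe. -/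
structure StrucD (Sg : Signature) where
  carrier : Type
  interp : InterpD Sg carrier

/-- The `r`-type of a bundled structure. -/
def StrucD.typeAt {Sg : Signature} (S : StrucD Sg) (r : ℕ) : Set (MSO Sg.addD) :=
  S.interp.typeAt r

/-- Isomorphism of structures over `(Σ,𝔇)`. -/
structure IsoD {Sg : Signature} (S T : StrucD Sg) where
  equiv : S.carrier ≃ T.carrier
  map_rel : ∀ (R : Sg.Rel) (g : Fin (Sg.arity R) → S.carrier),
      g ∈ S.interp.rel R ↔ (fun i => equiv (g i)) ∈ T.interp.rel R
  map_const : ∀ c, equiv (S.interp.const c) = T.interp.const c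
  map_D : ∀ u, u ∈ S.interp.D ↔ equiv u ∈ T.interp.D

/-- The identifications performed by glueing: `σ₁(c) ∼ σ₂(c)` for every shared
constant `c` (here both structures are over the same signature, so all constants
are shared). -/
def glueRel {Sg : Signature} (S₁ S₂ : StrucD Sg) :
    (S₁.carrier ⊕ S₂.carrier) → (S₁.carrier ⊕ S₂.carrier) → Prop :=
  fun a b => ∃ c : Sg.Const, a = Sum.inl (S₁.interp.const c) ∧ b = Sum.inr (S₂.interp.const c)

/-- Glueing of two structures (with disjoint universes, realized by the sum type):
the quotient of the disjoint union identifying the elements denoted by shared constants. -/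
def glueD {Sg : Signature} (S₁ S₂ : StrucD Sg) : StrucD Sg where
  carrier := Quot (glueRel S₁ S₂)
  interp :=
  { rel := fun R =>
      ((fun g (i : Fin (Sg.arity R)) => Quot.mk (glueRel S₁ S₂) (Sum.inl (g i))) '' S₁.interp.rel R) ∪
      ((fun g (i : Fin (Sg.arity R)) => Quot.mk (glueRel S₁ S₂) (Sum.inr (g i))) '' S₂.interp.rel R)
    rel_finite := fun R =>
      ((S₁.interp.rel_finite R).image _).union ((S₂.interp.rel_finite R).image _)
    const := fun c => Quot.mk (glueRel S₁ S₂) (Sum.inl (S₁.interp.const c))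
    D := ((fun u => Quot.mk (glueRel S₁ S₂) (Sum.inl u)) '' S₁.interp.D) ∪
         ((fun u => Quot.mk (glueRel S₁ S₂) (Sum.inr u)) '' S₂.interp.D)
    D_finite := (S₁.interp.D_finite.image _).union (S₂.interp.D_finite.image _) }

/-- The encoding `enc_k((U,σ),ν)` of the store values into the structure:
port constant `c_{M+i}` (for `i < k`) denotes `ν(i)`, and the store values are
added to `𝔇`. -/
def encD {Sg : Signature} {U : Type} (k : ℕ) (σ : InterpD Sg U) (ν : ℕ → U) :
    InterpD (Sg.addConsts k) U where
  rel := σ.rel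
  rel_finite := σ.rel_finite
  const := Sum.elim σ.const (fun i : Fin k => ν i)
  D := σ.D ∪ ν '' Set.Iio k
  D_finite := σ.D_finite.union ((Set.finite_Iio k).image ν)

/-- Pointwise union of two interpretations over the same universe
(the composition `•`, when the disjointness conditions hold). -/
def InterpD.union {Sg : Signature} {U : Type} (σ₁ σ₂ : InterpD Sg U) : InterpD Sg U where
  rel := fun R => σ₁.rel R ∪ σ₂.rel R
  rel_finite := fun R => (σ₁.rel_finite R).union (σ₂.rel_finite R)
  const := σ₁.const
  D := σ₁.D ∪ σ₂.D
  D_finite := σ₁.D_finite.union σ₂.D_finite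
/-- The operation `glue(fgt_{M+i}(S), S')` where `S'` is a structure over
`({c_{M+i}},𝔇)` with a singleton universe satisfying `𝔇(c_{M+i})`: the port
constant `c_{M+i}` is re-pointed to a fresh element, which is added to `𝔇`. -/
def refreshC {Sg : Signature} {k : ℕ} (i : Fin (k+1)) (S : StrucD (Sg.addConsts (k+1))) :
    StrucD (Sg.addConsts (k+1)) where
  carrier := S.carrier ⊕ Unit
  interp :=
  { rel := fun R => (fun g (a : Fin (Sg.arity R)) => Sum.inl (g a)) '' S.interp.rel R
    rel_finite := fun R => (S.interp.rel_finite R).image _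
    const := fun c =>
      match c with
      | Sum.inl a => Sum.inl (S.interp.const (Sum.inl a))
      | Sum.inr j => if j = i then Sum.inr () else Sum.inl (S.interp.const (Sum.inr j))
    D := (Sum.inl '' S.interp.D) ∪ {Sum.inr ()}
    D_finite := (S.interp.D_finite.image _).union (Set.finite_singleton _) }

/-- An MSO sentence over `(Σ,𝔇)` is also a sentence over `(Σ ∪ Π,𝔇)`. -/
def MSO.addPorts {Sg : Signature} (k : ℕ) : MSO Sg.addD → MSO (Sg.addConsts k).addD
  | .rel R args => .rel R (fun j => (args j).map id Sum.inl)
  | .eq t₁ t₂ => .eq (t₁.map id Sum.inl) (t₂.map id Sum.inl)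
  | .mem t X => .mem (t.map id Sum.inl) X
  | .not φ => .not (φ.addPorts k)
  | .and φ ψ => .and (φ.addPorts k) (ψ.addPorts k)
  | .exFO y φ => .exFO y (φ.addPorts k)
  | .exSO Y φ => .exSO Y (φ.addPorts k)

/-- The SID `Δ_{k,φ}`: the annotation of `Δ_tw^k` with `qr(φ)`-types. The
predicate `A^τ` (arity `k+1`) is encoded by `Sum.inl τ`; the nullary predicate
`A_{k,φ}` by `Sum.inr ()`. The abstract operations `⊛` and `fgt♯` are expressed
via their defining property: `τ₁ ⊛ τ₂` is the type of the glueing of (any) two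
structures of types `τ₁` and `τ₂`, and `fgt♯_{M+i}(τ₁) ⊛ ρ_i` is the type of
`refreshC i S` for (any) `S` of type `τ₁`. -/
def twFormSID (Sg : Signature) (k : ℕ) (φ : MSO Sg.addD) : SID Sg where
  P := Set (MSO ((Sg.addConsts (k+1)).addD)) ⊕ Unit
  ar := fun p => Sum.elim (fun _ => k+1) (fun _ => 0) p
  rules := fun p =>
    match p with
    | Sum.inl τ =>
      -- (5)  A^τ ← A^{τ₁} * A^{τ₂}  where τ = τ₁ ⊛ τ₂
      {ρ | ∃ τ₁ τ₂ : Set (MSO ((Sg.addConsts (k+1)).addD)),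
          ρ = SLRForm.star (.pred (Sum.inl τ₁) fun a => a.1) (.pred (Sum.inl τ₂) fun a => a.1) ∧
          ∃ S₁ S₂ : StrucD (Sg.addConsts (k+1)),
            S₁.typeAt φ.qr = τ₁ ∧ S₂.typeAt φ.qr = τ₂ ∧ (glueD S₁ S₂).typeAt φ.qr = τ} ∪
      -- (6)  A^τ ← ∃y. 𝔇(y) * A^{τ₁}(x₁,…,x_{k+1})[xᵢ/y]
      --      where τ = fgt♯_{M+i}(τ₁) ⊛ ρᵢ
      {ρ | ∃ (i : Fin (k+1)) (τ₁ : Set (MSO ((Sg.addConsts (k+1)).addD))),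
          ρ = SLRForm.ex (k+1) (.star (.datom (k+1))
            (.pred (Sum.inl τ₁) (fun j : Fin (k+1) => if j = i then (k+1 : ℕ) else j.1))) ∧
          ∃ S : StrucD (Sg.addConsts (k+1)),
            S.typeAt φ.qr = τ₁ ∧ (refreshC i S).typeAt φ.qr = τ} ∪
      -- (7)  A^τ ← R(y₁,…,y_{#R})  where τ is the type of a structure S with
      --      S ⊩ R(y₁,…,y_{#R})[x₁/c_{M+1},…] * ⋆ⱼ 𝔇(c_{M+j})
      {ρ | ∃ (R : Sg.Rel) (f : Fin (Sg.arity R) → Fin (k+1)),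
          ρ = SLRForm.rel R (fun a => (f a).1) ∧
          ∃ S : StrucD (Sg.addConsts (k+1)),
            S.interp.rel R = {fun a => S.interp.const (Sum.inr (f a))} ∧
            (∀ R', R' ≠ R → S.interp.rel R' = ∅) ∧
            S.interp.D = Set.range (fun j : Fin (k+1) => S.interp.const (Sum.inr j)) ∧
            Function.Injective (fun j : Fin (k+1) => S.interp.const (Sum.inr j)) ∧
            S.typeAt φ.qr = τ}
    | Sum.inr _ =>
      -- (8)  A_{k,φ}() ← ∃x₁…∃x_{k+1}. 𝔇(x₁) * … * 𝔇(x_{k+1}) * A^τ(x₁,…,x_{k+1})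
      --      for each τ with φ ∈ τ
      {ρ | ∃ τ : Set (MSO ((Sg.addConsts (k+1)).addD)),
          MSO.addPorts (k+1) φ ∈ τ ∧
          ρ = (List.range (k+1)).foldr (fun i acc => SLRForm.ex i acc)
            ((List.range (k+1)).foldr (fun i acc => SLRForm.star (.datom i) acc)
              (SLRForm.pred (Sum.inl τ) (fun a => a.1)))}

/-- Restriction of a structure to a subset of the universe containing all constants. -/
def Interp.restrict {Sg : Signature} {U : Type} (σ : Interp Sg U) (V : Set U)
    (hc : ∀ c, σ.const c ∈ V) : Interp Sg V where
  rel := fun R => {g | (fun i => (g i : U)) ∈ σ.rel R}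
  rel_finite := fun R => by
    show ((fun (g : Fin (Sg.arity R) → V) (i : Fin (Sg.arity R)) => (g i : U)) ⁻¹'
      σ.rel R).Finite
    refine Set.Finite.preimage ?_ (σ.rel_finite R)
    intro a _ b _ hab
    funext i
    exact Subtype.ext (congrFun hab i)
  const := fun c => ⟨σ.const c, hc c⟩


open Set

namespace SingleTypeAux

/-- threshold-equal cardinality -/
def eqC (q : ℕ) {α β : Type} (s : Set α) (t : Set β) : Prop :=
  s.encard = t.encard ∨
    (((2^q - 1 : ℕ) : ℕ∞) ≤ s.encard ∧ ((2^q - 1 : ℕ) : ℕ∞) ≤ t.encard)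

lemma eqC_symm {q : ℕ} {α β : Type} {s : Set α} {t : Set β} (h : eqC q s t) : eqC q t s := by
  rcases h with h | ⟨h1, h2⟩
  · exact Or.inl h.symm
  · exact Or.inr ⟨h2, h1⟩

lemma eqC_mono {q q' : ℕ} {α β : Type} {s : Set α} {t : Set β} (hq : q' ≤ q)
    (h : eqC q s t) : eqC q' s t := by
  rcases h with h | ⟨h1, h2⟩
  · exact Or.inl h
  · have hle : ((2^q' - 1 : ℕ) : ℕ∞) ≤ ((2^q - 1 : ℕ) : ℕ∞) := by
      exact_mod_cast Nat.sub_le_sub_right (Nat.pow_le_pow_right (by norm_num) hq) 1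
    exact Or.inr ⟨le_trans hle h1, le_trans hle h2⟩

lemma eqC_nonempty {q : ℕ} {α β : Type} {s : Set α} {t : Set β}
    (h : eqC (q+1) s t) (hs : s.Nonempty) : t.Nonempty := by
  rw [← one_le_encard_iff_nonempty] at hs ⊢
  rcases h with h | ⟨_, h2⟩
  · rwa [← h]
  · refine le_trans ?_ h2
    have : (1:ℕ) ≤ 2^(q+1) - 1 := by
      have : 2 ≤ 2^(q+1) := Nat.le_self_pow (by omega) 2
      omega
    exact_mod_cast this

lemma eqC_insert {q : ℕ} {α β : Type} {s : Set α} {t : Set β} {a : α} {b : β}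
    (h : eqC q s t) (hm : a ∈ s ↔ b ∈ t) : eqC q (insert a s) (insert b t) := by
  by_cases ha : a ∈ s
  · rwa [insert_eq_self.2 ha, insert_eq_self.2 (hm.1 ha)]
  · have hb : b ∉ t := fun hb => ha (hm.2 hb)
    rcases h with h | ⟨h1, h2⟩
    · exact Or.inl (by rw [encard_insert_of_notMem ha, encard_insert_of_notMem hb, h])
    · exact Or.inr ⟨le_trans h1 (encard_mono (subset_insert _ _)),
        le_trans h2 (encard_mono (subset_insert _ _))⟩

lemma eqC_diff_singleton {q : ℕ} {α β : Type} {s : Set α} {t : Set β} {a : α} {b : β}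
    (h : eqC (q+1) s t) (hm : a ∈ s ↔ b ∈ t) : eqC q (s \ {a}) (t \ {b}) := by
  by_cases ha : a ∈ s
  · have hb : b ∈ t := hm.1 ha
    have e1 := encard_diff_singleton_add_one ha
    have e2 := encard_diff_singleton_add_one hb
    rcases h with h | ⟨h1, h2⟩
    · refine Or.inl ?_
      have : (s \ {a}).encard + 1 = (t \ {b}).encard + 1 := by rw [e1, e2, h]
      exact WithTop.add_right_cancel ENat.one_ne_top this
    · refine Or.inr ⟨?_, ?_⟩
      · have : ((2^q - 1 : ℕ) : ℕ∞) + 1 ≤ (s \ {a}).encard + 1 := by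
          rw [e1]
          refine le_trans ?_ h1
          have : (2^q - 1 : ℕ) + 1 ≤ 2^(q+1) - 1 := by
            have h2q : 1 ≤ 2^q := Nat.one_le_two_pow
            have : 2^(q+1) = 2 * 2^q := by ring
            omega
          exact_mod_cast this
        exact (ENat.add_le_add_iff_right ENat.one_ne_top).1 this
      · have : ((2^q - 1 : ℕ) : ℕ∞) + 1 ≤ (t \ {b}).encard + 1 := by
          rw [e2]
          refine le_trans ?_ h2
          have : (2^q - 1 : ℕ) + 1 ≤ 2^(q+1) - 1 := by
            have h2q : 1 ≤ 2^q := Nat.one_le_two_pow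
            have : 2^(q+1) = 2 * 2^q := by ring
            omega
          exact_mod_cast this
        exact (ENat.add_le_add_iff_right ENat.one_ne_top).1 this
  · have hb : b ∉ t := fun hb => ha (hm.2 hb)
    rw [diff_singleton_eq_self ha, diff_singleton_eq_self hb]
    exact eqC_mono (Nat.le_succ q) h

lemma eqC_union {q : ℕ} {α β : Type} {s₁ s₂ : Set α} {t₁ t₂ : Set β}
    (h1 : eqC q s₁ t₁) (h2 : eqC q s₂ t₂) (hs : Disjoint s₁ s₂) (ht : Disjoint t₁ t₂) :
    eqC q (s₁ ∪ s₂) (t₁ ∪ t₂) := by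
  rcases h1 with h1 | ⟨ha1, hb1⟩
  · rcases h2 with h2 | ⟨ha2, hb2⟩
    · exact Or.inl (by rw [encard_union_eq hs, encard_union_eq ht, h1, h2])
    · exact Or.inr ⟨le_trans ha2 (encard_mono subset_union_right),
        le_trans hb2 (encard_mono subset_union_right)⟩
  · exact Or.inr ⟨le_trans ha1 (encard_mono subset_union_left),
      le_trans hb1 (encard_mono subset_union_left)⟩

private lemma le_of_add_le_add {a b : ℕ∞} {k k' : ℕ} (hb : b ≤ (k' : ℕ∞))
    (h : ((k : ℕ∞)) + (k' : ℕ∞) ≤ a + b) : (k : ℕ∞) ≤ a := by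
  have h2 : ((k : ℕ∞)) + (k' : ℕ∞) ≤ a + (k' : ℕ∞) :=
    le_trans h (add_le_add_right hb a)
  exact (WithTop.add_le_add_iff_right (WithTop.natCast_ne_top k')).1 h2

lemma eqC_split {q : ℕ} {α β : Type} {s : Set α} {t : Set β}
    (h : eqC (q+1) s t) (s₁ : Set α) (hs : s₁ ⊆ s) :
    ∃ t₁, t₁ ⊆ t ∧ eqC q s₁ t₁ ∧ eqC q (s \ s₁) (t \ t₁) := by
  set k : ℕ := 2^q - 1 with hk
  have hkk : (k:ℕ) + k ≤ 2^(q+1) - 1 := by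
    have h2q : 1 ≤ 2^q := Nat.one_le_two_pow
    have : 2^(q+1) = 2 * 2^q := by ring
    omega
  have hts : ∀ u : Set β, u ⊆ t → (t \ u).encard + u.encard = t.encard :=
    fun u hu => encard_diff_add_encard_of_subset hu
  have hss : (s \ s₁).encard + s₁.encard = s.encard := encard_diff_add_encard_of_subset hs
  by_cases h₁ : s₁.encard ≤ (k : ℕ∞)
  · have hle : s₁.encard ≤ t.encard := by
      rcases h with h | ⟨ha, hb⟩
      · exact h ▸ encard_mono hs
      · refine le_trans h₁ (le_trans ?_ hb)
        exact_mod_cast Nat.sub_le_sub_right (Nat.pow_le_pow_right (by norm_num) (Nat.le_succ q)) 1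
    obtain ⟨t₁, ht₁, hcard⟩ := exists_subset_encard_eq hle
    refine ⟨t₁, ht₁, Or.inl hcard.symm, ?_⟩
    have e2 := hts t₁ ht₁
    rcases h with h | ⟨ha, hb⟩
    · refine Or.inl ?_
      have : (s \ s₁).encard + s₁.encard = (t \ t₁).encard + s₁.encard := by
        rw [hss, ← hcard, e2, h]
      exact WithTop.add_right_cancel (lt_of_le_of_lt h₁ (by simp) :
        s₁.encard < ⊤).ne this
    · refine Or.inr ⟨?_, ?_⟩
      · exact le_of_add_le_add (k' := k) h₁
          (by rw [hss]; exact le_trans (by exact_mod_cast hkk) ha)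
      · exact le_of_add_le_add (k' := k) (hcard ▸ h₁)
          (by rw [e2]; exact le_trans (by exact_mod_cast hkk) hb)
  by_cases h₂ : (s \ s₁).encard ≤ (k : ℕ∞)
  · have hle : (s \ s₁).encard ≤ t.encard := by
      rcases h with h | ⟨ha, hb⟩
      · exact h ▸ encard_mono diff_subset
      · refine le_trans h₂ (le_trans ?_ hb)
        exact_mod_cast Nat.sub_le_sub_right (Nat.pow_le_pow_right (by norm_num) (Nat.le_succ q)) 1
    obtain ⟨t₂, ht₂, hcard⟩ := exists_subset_encard_eq hle
    refine ⟨t \ t₂, diff_subset, ?_, ?_⟩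
    · have e2 := hts t₂ ht₂
      rcases h with h | ⟨ha, hb⟩
      · refine Or.inl ?_
        have : s₁.encard + (s \ s₁).encard = (t \ t₂).encard + (s \ s₁).encard := by
          rw [add_comm s₁.encard, hss, ← hcard, e2, h]
        exact WithTop.add_right_cancel (lt_of_le_of_lt h₂ (by simp) :
          (s \ s₁).encard < ⊤).ne this
      · refine Or.inr ⟨le_of_lt (lt_of_not_ge h₁), ?_⟩
        exact le_of_add_le_add (k' := k) (hcard ▸ h₂)
          (by rw [e2]; exact le_trans (by exact_mod_cast hkk) hb)
    · rw [diff_diff_cancel_left ht₂]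
      exact Or.inl hcard.symm
  · have ht2k : ((k:ℕ∞)) + (k:ℕ∞) ≤ t.encard := by
      rcases h with h | ⟨ha, hb⟩
      · rw [← h, ← hss]
        exact add_le_add (le_of_lt (lt_of_not_ge h₂)) (le_of_lt (lt_of_not_ge h₁))
      · exact le_trans (by exact_mod_cast hkk) hb
    have hkt : (k : ℕ∞) ≤ t.encard := le_trans le_self_add ht2k
    obtain ⟨t₁, ht₁, hcard⟩ := exists_subset_encard_eq hkt
    refine ⟨t₁, ht₁, Or.inr ⟨le_of_lt (lt_of_not_ge h₁), hcard.symm.le⟩,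
      Or.inr ⟨le_of_lt (lt_of_not_ge h₂), ?_⟩⟩
    exact le_of_add_le_add (k' := k) hcard.le (by rw [hts t₁ ht₁]; exact ht2k)


section Main

variable {Sg : Signature}

/-- Elements of a cell `c` that are anonymous (not a value of a tracked variable)
and fresh (outside `A`). -/
def NSet {α : Type} (A : Set α) (B₁ : ℕ) {B₂ : ℕ} (ν : ℕ → α) (μ : ℕ → Set α)
    (c : Fin B₂ → Prop) : Set α :=
  {u | u ∉ A ∧ (∀ n < B₁, ν n ≠ u) ∧ ∀ X : Fin B₂, (u ∈ μ X.1 ↔ c X)}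

/-- A correspondence between two structures agreeing on their "active" parts. -/
structure Corr {U₁ U₂ : Type} (σ₁ : Interp Sg U₁) (σ₂ : Interp Sg U₂)
    (A₁ : Set U₁) (A₂ : Set U₂) where
  e : ↥A₁ ≃ ↥A₂
  const_mem₁ : ∀ c, σ₁.const c ∈ A₁
  const_mem₂ : ∀ c, σ₂.const c ∈ A₂
  e_const : ∀ c, (e ⟨σ₁.const c, const_mem₁ c⟩ : U₂) = σ₂.const c
  rel_mem₁ : ∀ R g, g ∈ σ₁.rel R → ∀ i, g i ∈ A₁
  rel_mem₂ : ∀ R g, g ∈ σ₂.rel R → ∀ i, g i ∈ A₂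
  e_rel : ∀ (R : Sg.Rel) (g : Fin (Sg.arity R) → ↥A₁),
    (fun i => (g i : U₁)) ∈ σ₁.rel R ↔ (fun i => (e (g i) : U₂)) ∈ σ₂.rel R

variable {U₁ U₂ : Type} {σ₁ : Interp Sg U₁} {σ₂ : Interp Sg U₂} {A₁ : Set U₁} {A₂ : Set U₂}

/-- Swapping a correspondence. -/
def Corr.swap (C : Corr σ₁ σ₂ A₁ A₂) : Corr σ₂ σ₁ A₂ A₁ where
  e := C.e.symm
  const_mem₁ := C.const_mem₂
  const_mem₂ := C.const_mem₁
  e_const := fun c => by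
    have h : (⟨σ₂.const c, C.const_mem₂ c⟩ : ↥A₂) = C.e ⟨σ₁.const c, C.const_mem₁ c⟩ :=
      Subtype.ext (C.e_const c).symm
    rw [h, Equiv.symm_apply_apply]
  rel_mem₁ := C.rel_mem₂
  rel_mem₂ := C.rel_mem₁
  e_rel := fun R g => by
    have := C.e_rel R (fun i => C.e.symm (g i))
    simp only [Equiv.apply_symm_apply] at this
    exact this.symm

/-- The Ehrenfeucht–Fraïssé style invariant. -/
structure Inv (C : Corr σ₁ σ₂ A₁ A₂) (q B₁ B₂ : ℕ)
    (ν₁ : ℕ → U₁) (μ₁ : ℕ → Set U₁) (ν₂ : ℕ → U₂) (μ₂ : ℕ → Set U₂) : Prop where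
  pt : ∀ n < B₁, (∃ h : ν₁ n ∈ A₁, (C.e ⟨ν₁ n, h⟩ : U₂) = ν₂ n) ∨ (ν₁ n ∉ A₁ ∧ ν₂ n ∉ A₂)
  eqv : ∀ n < B₁, ∀ m < B₁, (ν₁ n = ν₁ m ↔ ν₂ n = ν₂ m)
  memv : ∀ n < B₁, ∀ X < B₂, (ν₁ n ∈ μ₁ X ↔ ν₂ n ∈ μ₂ X)
  memA : ∀ X < B₂, ∀ a : ↥A₁, ((a : U₁) ∈ μ₁ X ↔ (C.e a : U₂) ∈ μ₂ X)
  count : ∀ c : Fin B₂ → Prop, eqC q (NSet A₁ B₁ ν₁ μ₁ c) (NSet A₂ B₁ ν₂ μ₂ c)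

lemma Inv.mono {C : Corr σ₁ σ₂ A₁ A₂} {q q' B₁ B₂ : ℕ} {ν₁ μ₁ ν₂ μ₂}
    (hq : q' ≤ q) (h : Inv C q B₁ B₂ ν₁ μ₁ ν₂ μ₂) : Inv C q' B₁ B₂ ν₁ μ₁ ν₂ μ₂ :=
  ⟨h.pt, h.eqv, h.memv, h.memA, fun c => eqC_mono hq (h.count c)⟩

lemma Inv.swap {C : Corr σ₁ σ₂ A₁ A₂} {q B₁ B₂ : ℕ} {ν₁ μ₁ ν₂ μ₂}
    (h : Inv C q B₁ B₂ ν₁ μ₁ ν₂ μ₂) : Inv C.swap q B₁ B₂ ν₂ μ₂ ν₁ μ₁ where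
  pt := fun n hn => by
    rcases h.pt n hn with ⟨hh, he⟩ | ⟨h1, h2⟩
    · refine Or.inl ⟨he ▸ (C.e ⟨ν₁ n, hh⟩).2, ?_⟩
      show (C.e.symm ⟨ν₂ n, _⟩ : U₁) = ν₁ n
      have : (⟨ν₂ n, he ▸ (C.e ⟨ν₁ n, hh⟩).2⟩ : ↥A₂) = C.e ⟨ν₁ n, hh⟩ := Subtype.ext he.symm
      rw [this, Equiv.symm_apply_apply]
    · exact Or.inr ⟨h2, h1⟩
  eqv := fun n hn m hm => (h.eqv n hn m hm).symm
  memv := fun n hn X hX => (h.memv n hn X hX).symm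
  memA := fun X hX a => by
    have := h.memA X hX (C.e.symm a)
    simp only [Equiv.apply_symm_apply] at this
    exact this.symm
  count := fun c => eqC_symm (h.count c)


/-- Anonymity ignoring index `y`. -/
def TSet {α : Type} (A : Set α) (B₁ : ℕ) {B₂ : ℕ} (ν : ℕ → α) (μ : ℕ → Set α)
    (y : ℕ) (c : Fin B₂ → Prop) : Set α :=
  {u | u ∉ A ∧ (∀ n < B₁, n ≠ y → ν n ≠ u) ∧ ∀ X : Fin B₂, (u ∈ μ X.1 ↔ c X)}

lemma NSet_update {α : Type} {A : Set α} {B₁ B₂ : ℕ} {ν : ℕ → α} {μ : ℕ → Set α}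
    {c : Fin B₂ → Prop} {y : ℕ} (hy : y < B₁) (u : α) :
    NSet A B₁ (Function.update ν y u) μ c = TSet A B₁ ν μ y c \ {u} := by
  ext w
  simp only [NSet, TSet, Set.mem_setOf_eq, Set.mem_diff, Set.mem_singleton_iff]
  constructor
  · rintro ⟨hA', hanon, hcell⟩
    refine ⟨⟨hA', fun n hn hny => ?_, hcell⟩, fun hu => ?_⟩
    · have := hanon n hn; rwa [Function.update_of_ne hny] at this
    · have := hanon y hy; rw [Function.update_self] at this; exact this hu.symm
  · rintro ⟨⟨hA', hanon, hcell⟩, hne⟩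
    refine ⟨hA', fun n hn => ?_, hcell⟩
    by_cases hny : n = y
    · subst hny; rw [Function.update_self]; exact fun hc => hne hc.symm
    · rw [Function.update_of_ne hny]; exact hanon n hn hny

lemma NSet_subset_TSet {α : Type} {A : Set α} {B₁ B₂ : ℕ} {ν : ℕ → α} {μ : ℕ → Set α}
    {c : Fin B₂ → Prop} {y : ℕ} : NSet A B₁ ν μ c ⊆ TSet A B₁ ν μ y c :=
  fun u ⟨h1, h2, h3⟩ => ⟨h1, fun n hn _ => h2 n hn, h3⟩

lemma NSet_not_mem_vy {α : Type} {A : Set α} {B₁ B₂ : ℕ} {ν : ℕ → α} {μ : ℕ → Set α}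
    {c : Fin B₂ → Prop} {y : ℕ} (hy : y < B₁) : ν y ∉ NSet A B₁ ν μ c :=
  fun ⟨_, h2, _⟩ => h2 y hy rfl

lemma TSet_insert {α : Type} {A : Set α} {B₁ B₂ : ℕ} {ν : ℕ → α} {μ : ℕ → Set α}
    {c : Fin B₂ → Prop} {y : ℕ} (hq : ν y ∈ TSet A B₁ ν μ y c) :
    TSet A B₁ ν μ y c = insert (ν y) (NSet A B₁ ν μ c) := by
  apply Set.Subset.antisymm
  · intro u ⟨h1, h2, h3⟩
    by_cases huy : u = ν y
    · exact Or.inl huy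
    · refine Or.inr ⟨h1, fun n hn => ?_, h3⟩
      by_cases hny : n = y
      · subst hny; exact fun hc => huy hc.symm
      · exact h2 n hn hny
  · intro u hu
    rcases hu with hu | hu
    · exact hu ▸ hq
    · exact NSet_subset_TSet hu

lemma TSet_eq {α : Type} {A : Set α} {B₁ B₂ : ℕ} {ν : ℕ → α} {μ : ℕ → Set α}
    {c : Fin B₂ → Prop} {y : ℕ} (hq : ν y ∉ TSet A B₁ ν μ y c) :
    TSet A B₁ ν μ y c = NSet A B₁ ν μ c := by
  apply Set.Subset.antisymm
  · intro u hu
    obtain ⟨h1, h2, h3⟩ := hu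
    refine ⟨h1, fun n hn => ?_, h3⟩
    by_cases hny : n = y
    · subst hny
      intro hc
      exact hq (by rw [hc]; exact ⟨h1, h2, h3⟩)
    · exact h2 n hn hny
  · exact NSet_subset_TSet

lemma pickFO {C : Corr σ₁ σ₂ A₁ A₂} {q B₁ B₂ : ℕ} {ν₁ : ℕ → U₁} {μ₁ : ℕ → Set U₁}
    {ν₂ : ℕ → U₂} {μ₂ : ℕ → Set U₂}
    (h : Inv C (q+1) B₁ B₂ ν₁ μ₁ ν₂ μ₂) (y : ℕ) (hy : y < B₁) (u₁ : U₁) :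
    ∃ u₂ : U₂, Inv C q B₁ B₂ (Function.update ν₁ y u₁) μ₁ (Function.update ν₂ y u₂) μ₂ := by
  classical
  obtain ⟨u₂, hpt, heq, hmem⟩ :
      ∃ u₂ : U₂,
        ((∃ hh : u₁ ∈ A₁, (C.e ⟨u₁, hh⟩ : U₂) = u₂) ∨ (u₁ ∉ A₁ ∧ u₂ ∉ A₂)) ∧
        (∀ m < B₁, (ν₁ m = u₁ ↔ ν₂ m = u₂)) ∧
        (∀ X < B₂, (u₁ ∈ μ₁ X ↔ u₂ ∈ μ₂ X)) := by
    by_cases hA : u₁ ∈ A₁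
    · refine ⟨C.e ⟨u₁, hA⟩, Or.inl ⟨hA, rfl⟩, ?_, ?_⟩
      · intro m hm
        constructor
        · intro hmm
          rcases h.pt m hm with ⟨hh, he⟩ | ⟨h1, _⟩
          · rw [← he]; exact congrArg Subtype.val (congrArg C.e (Subtype.ext hmm))
          · exact absurd (hmm ▸ hA) h1
        · intro hmm
          rcases h.pt m hm with ⟨hh, he⟩ | ⟨_, h2⟩
          · have h3 : C.e ⟨ν₁ m, hh⟩ = C.e ⟨u₁, hA⟩ := Subtype.ext (by rw [he, hmm])
            exact congrArg Subtype.val (C.e.injective h3)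
          · exact absurd (by rw [hmm]; exact (C.e ⟨u₁, hA⟩).2) h2
      · intro X hX; exact h.memA X hX ⟨u₁, hA⟩
    · by_cases htr : ∃ n, n < B₁ ∧ ν₁ n = u₁
      · obtain ⟨n, hn, hnu⟩ := htr
        refine ⟨ν₂ n, ?_, ?_, ?_⟩
        · rcases h.pt n hn with ⟨hh, _⟩ | ⟨_, h2⟩
          · exact absurd (hnu ▸ hh) hA
          · exact Or.inr ⟨hA, h2⟩
        · intro m hm; rw [← hnu]; exact h.eqv m hm n hn
        · intro X hX; rw [← hnu]; exact h.memv n hn X hX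
      · push_neg at htr
        have hu1 : u₁ ∈ NSet A₁ B₁ ν₁ μ₁ (fun X : Fin B₂ => u₁ ∈ μ₁ X.1) :=
          ⟨hA, fun n hn => htr n hn, fun X => Iff.rfl⟩
        obtain ⟨u₂, hu2A, hu2anon, hu2cell⟩ := eqC_nonempty (h.count _) ⟨u₁, hu1⟩
        refine ⟨u₂, Or.inr ⟨hA, hu2A⟩, ?_, ?_⟩
        · intro m hm
          exact iff_of_false (fun hc => htr m hm hc) (fun hc => hu2anon m hm hc)
        · intro X hX
          exact (hu2cell ⟨X, hX⟩).symm
  refine ⟨u₂, ?_, ?_, ?_, h.memA, ?_⟩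
  · intro n hn
    by_cases hny : n = y
    · subst hny; simp only [Function.update_self]; exact hpt
    · simp only [Function.update_of_ne hny]; exact h.pt n hn
  · intro n hn m hm
    by_cases hny : n = y <;> by_cases hmy : m = y
    · subst hny; subst hmy; simp
    · subst hny
      simp only [Function.update_self, Function.update_of_ne hmy]
      rw [eq_comm, eq_comm (a := u₂)]; exact heq m hm
    · subst hmy
      simp only [Function.update_self, Function.update_of_ne hny]
      exact heq n hn
    · simp only [Function.update_of_ne hny, Function.update_of_ne hmy]
      exact h.eqv n hn m hm
  · intro n hn X hX
    by_cases hny : n = y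
    · subst hny; simp only [Function.update_self]; exact hmem X hX
    · simp only [Function.update_of_ne hny]; exact h.memv n hn X hX
  · intro c
    have Hy : ν₁ y ∈ TSet A₁ B₁ ν₁ μ₁ y c ↔ ν₂ y ∈ TSet A₂ B₁ ν₂ μ₂ y c := by
      have i1 : ν₁ y ∈ A₁ ↔ ν₂ y ∈ A₂ := by
        rcases h.pt y hy with ⟨hh, he⟩ | ⟨h1, h2⟩
        · exact iff_of_true hh (he ▸ (C.e ⟨ν₁ y, hh⟩).2)
        · exact iff_of_false h1 h2
      have i2 : (∀ n < B₁, n ≠ y → ν₁ n ≠ ν₁ y) ↔ (∀ n < B₁, n ≠ y → ν₂ n ≠ ν₂ y) :=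
        ⟨fun hh n hn hny hc => hh n hn hny ((h.eqv n hn y hy).2 hc),
         fun hh n hn hny hc => hh n hn hny ((h.eqv n hn y hy).1 hc)⟩
      have i3 : (∀ X : Fin B₂, (ν₁ y ∈ μ₁ X.1 ↔ c X)) ↔ (∀ X : Fin B₂, (ν₂ y ∈ μ₂ X.1 ↔ c X)) :=
        forall_congr' fun X => iff_congr (h.memv y hy X.1 X.2) Iff.rfl
      exact and_congr (not_congr i1) (and_congr i2 i3)
    have Hu : u₁ ∈ TSet A₁ B₁ ν₁ μ₁ y c ↔ u₂ ∈ TSet A₂ B₁ ν₂ μ₂ y c := by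
      have i1 : u₁ ∈ A₁ ↔ u₂ ∈ A₂ := by
        rcases hpt with ⟨hh, he⟩ | ⟨h1, h2⟩
        · exact iff_of_true hh (he ▸ (C.e ⟨u₁, hh⟩).2)
        · exact iff_of_false h1 h2
      have i2 : (∀ n < B₁, n ≠ y → ν₁ n ≠ u₁) ↔ (∀ n < B₁, n ≠ y → ν₂ n ≠ u₂) :=
        ⟨fun hh n hn hny hc => hh n hn hny ((heq n hn).2 hc),
         fun hh n hn hny hc => hh n hn hny ((heq n hn).1 hc)⟩
      have i3 : (∀ X : Fin B₂, (u₁ ∈ μ₁ X.1 ↔ c X)) ↔ (∀ X : Fin B₂, (u₂ ∈ μ₂ X.1 ↔ c X)) :=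
        forall_congr' fun X => iff_congr (hmem X.1 X.2) Iff.rfl
      exact and_congr (not_congr i1) (and_congr i2 i3)
    have hTeq : eqC (q+1) (TSet A₁ B₁ ν₁ μ₁ y c) (TSet A₂ B₁ ν₂ μ₂ y c) := by
      by_cases hq1 : ν₁ y ∈ TSet A₁ B₁ ν₁ μ₁ y c
      · rw [TSet_insert hq1, TSet_insert (Hy.1 hq1)]
        exact eqC_insert (h.count c) (iff_of_false (NSet_not_mem_vy hy) (NSet_not_mem_vy hy))
      · rw [TSet_eq hq1, TSet_eq (fun hq2 => hq1 (Hy.2 hq2))]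
        exact h.count c
    rw [NSet_update hy, NSet_update hy]
    exact eqC_diff_singleton hTeq Hu


lemma NSet_update_SO {α : Type} (A : Set α) {B₁ B₂ : ℕ} (ν : ℕ → α) (μ : ℕ → Set α)
    (V : Set α) {Y : ℕ} (hY : Y < B₂) (c : Fin B₂ → Prop) :
    NSet A B₁ ν (Function.update μ Y V) c =
      ((NSet A B₁ ν μ (fun X => if X = ⟨Y, hY⟩ then True else c X)) ∩ {u | u ∈ V ↔ c ⟨Y, hY⟩}) ∪
      ((NSet A B₁ ν μ (fun X => if X = ⟨Y, hY⟩ then False else c X)) ∩ {u | u ∈ V ↔ c ⟨Y, hY⟩}) := by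
  classical
  ext u
  simp only [NSet, Set.mem_setOf_eq, Set.mem_inter_iff, Set.mem_union]
  constructor
  · rintro ⟨h1, h2, h3⟩
    have hYmem : u ∈ V ↔ c ⟨Y, hY⟩ := by
      have := h3 ⟨Y, hY⟩
      rwa [show Function.update μ Y V (⟨Y, hY⟩ : Fin B₂).1 = V from Function.update_self _ _ _]
        at this
    by_cases hmu : u ∈ μ Y
    · refine Or.inl ⟨⟨h1, h2, fun X => ?_⟩, hYmem⟩
      by_cases hXY : X = ⟨Y, hY⟩
      · subst hXY; simp only [if_pos rfl, if_true, iff_true]; exact hmu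
      · rw [if_neg hXY]
        have := h3 X
        rwa [Function.update_of_ne (fun hc => hXY (Fin.ext hc))] at this
    · refine Or.inr ⟨⟨h1, h2, fun X => ?_⟩, hYmem⟩
      by_cases hXY : X = ⟨Y, hY⟩
      · subst hXY; simp only [if_pos rfl, if_true, iff_false]; exact hmu
      · rw [if_neg hXY]
        have := h3 X
        rwa [Function.update_of_ne (fun hc => hXY (Fin.ext hc))] at this
  · rintro (⟨⟨h1, h2, h3⟩, hq⟩ | ⟨⟨h1, h2, h3⟩, hq⟩) <;> refine ⟨h1, h2, fun X => ?_⟩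
    · by_cases hXY : X = ⟨Y, hY⟩
      · subst hXY
        rw [show Function.update μ Y V (⟨Y, hY⟩ : Fin B₂).1 = V from Function.update_self _ _ _]
        exact hq
      · rw [Function.update_of_ne (fun hc => hXY (Fin.ext hc))]
        have := h3 X; rwa [if_neg hXY] at this
    · by_cases hXY : X = ⟨Y, hY⟩
      · subst hXY
        rw [show Function.update μ Y V (⟨Y, hY⟩ : Fin B₂).1 = V from Function.update_self _ _ _]
        exact hq
      · rw [Function.update_of_ne (fun hc => hXY (Fin.ext hc))]
        have := h3 X; rwa [if_neg hXY] at this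

lemma pickSO {C : Corr σ₁ σ₂ A₁ A₂} {q B₁ B₂ : ℕ} {ν₁ : ℕ → U₁} {μ₁ : ℕ → Set U₁}
    {ν₂ : ℕ → U₂} {μ₂ : ℕ → Set U₂}
    (h : Inv C (q+1) B₁ B₂ ν₁ μ₁ ν₂ μ₂) (Y : ℕ) (hY : Y < B₂) (V₁ : Set U₁) :
    ∃ V₂ : Set U₂, Inv C q B₁ B₂ ν₁ (Function.update μ₁ Y V₁) ν₂ (Function.update μ₂ Y V₂) := by
  classical
  have hch : ∀ c : Fin B₂ → Prop, ∃ W, W ⊆ NSet A₂ B₁ ν₂ μ₂ c ∧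
      eqC q (NSet A₁ B₁ ν₁ μ₁ c ∩ V₁) W ∧
      eqC q (NSet A₁ B₁ ν₁ μ₁ c \ V₁) (NSet A₂ B₁ ν₂ μ₂ c \ W) := by
    intro c
    obtain ⟨W, hW, h1, h2⟩ :=
      eqC_split (h.count c) (NSet A₁ B₁ ν₁ μ₁ c ∩ V₁) Set.inter_subset_left
    refine ⟨W, hW, h1, ?_⟩
    rwa [Set.diff_self_inter] at h2
  choose W hWsub hW1 hW2 using hch
  set V₂ : Set U₂ := {u₂ | (∃ hh : u₂ ∈ A₂, (C.e.symm ⟨u₂, hh⟩ : U₁) ∈ V₁) ∨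
      (∃ n, n < B₁ ∧ ν₂ n = u₂ ∧ ν₁ n ∈ V₁) ∨ (∃ c, u₂ ∈ W c)} with hV₂
  have hF1 : ∀ c : Fin B₂ → Prop, V₂ ∩ NSet A₂ B₁ ν₂ μ₂ c = W c := by
    intro c
    apply Set.Subset.antisymm
    · rintro u ⟨huV, huN⟩
      rcases huV with ⟨hh, _⟩ | ⟨n, hn, hnu, _⟩ | ⟨c', hc'⟩
      · exact absurd hh huN.1
      · exact absurd hnu (huN.2.1 n hn)
      · have hc'N := hWsub c' hc'
        have hcc : c' = c := by
          funext X
          exact propext (((hc'N.2.2 X).symm).trans (huN.2.2 X))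
        exact hcc ▸ hc'
    · intro u hu
      exact ⟨Or.inr (Or.inr ⟨c, hu⟩), hWsub c hu⟩
  refine ⟨V₂, h.pt, h.eqv, ?_, ?_, ?_⟩
  · intro n hn X hX
    by_cases hXY : X = Y
    · subst hXY
      simp only [Function.update_self]
      constructor
      · intro hv
        by_cases hA : ν₁ n ∈ A₁
        · rcases h.pt n hn with ⟨hh, he⟩ | ⟨h1, _⟩
          · refine Or.inl ⟨he ▸ (C.e ⟨ν₁ n, hh⟩).2, ?_⟩
            have hsub : (⟨ν₂ n, he ▸ (C.e ⟨ν₁ n, hh⟩).2⟩ : ↥A₂) = C.e ⟨ν₁ n, hh⟩ :=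
              Subtype.ext he.symm
            rw [hsub, Equiv.symm_apply_apply]
            exact hv
          · exact absurd hA h1
        · exact Or.inr (Or.inl ⟨n, hn, rfl, hv⟩)
      · intro hv
        rcases hv with ⟨hh, hv⟩ | ⟨m, hm, hmn, hv⟩ | ⟨c, hc⟩
        · rcases h.pt n hn with ⟨hh1, he⟩ | ⟨_, h2⟩
          · have hsub : (⟨ν₂ n, hh⟩ : ↥A₂) = C.e ⟨ν₁ n, hh1⟩ := Subtype.ext he.symm
            rw [hsub, Equiv.symm_apply_apply] at hv
            exact hv
          · exact absurd hh h2
        · have := (h.eqv m hm n hn).2 hmn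
          rwa [← this]
        · exact absurd rfl ((hWsub c hc).2.1 n hn)
    · rw [Function.update_of_ne hXY, Function.update_of_ne hXY]
      exact h.memv n hn X hX
  · intro X hX a
    by_cases hXY : X = Y
    · subst hXY
      simp only [Function.update_self]
      constructor
      · intro hv
        refine Or.inl ⟨(C.e a).2, ?_⟩
        have hsub : (⟨(C.e a : U₂), (C.e a).2⟩ : ↥A₂) = C.e a := Subtype.ext rfl
        rw [hsub, Equiv.symm_apply_apply]
        exact hv
      · intro hv
        rcases hv with ⟨hh, hv⟩ | ⟨m, hm, hmn, hv⟩ | ⟨c, hc⟩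
        · have hsub : (⟨(C.e a : U₂), hh⟩ : ↥A₂) = C.e a := Subtype.ext rfl
          rw [hsub, Equiv.symm_apply_apply] at hv
          exact hv
        · rcases h.pt m hm with ⟨hh1, he⟩ | ⟨_, h2⟩
          · have hee : C.e ⟨ν₁ m, hh1⟩ = C.e a := Subtype.ext (by rw [he, hmn])
            have hva : ν₁ m = (a : U₁) := congrArg Subtype.val (C.e.injective hee)
            rwa [hva] at hv
          · exact absurd (by rw [hmn]; exact (C.e a).2) h2
        · exact absurd (C.e a).2 (hWsub c hc).1
    · rw [Function.update_of_ne hXY, Function.update_of_ne hXY]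
      exact h.memA X hX a
  · intro c
    rw [NSet_update_SO A₁ ν₁ μ₁ V₁ hY c, NSet_update_SO A₂ ν₂ μ₂ V₂ hY c]
    set cT : Fin B₂ → Prop := fun X => if X = ⟨Y, hY⟩ then True else c X with hcT
    set cF : Fin B₂ → Prop := fun X => if X = ⟨Y, hY⟩ then False else c X with hcF
    have hNdisj : ∀ {α : Type} (A : Set α) (ν : ℕ → α) (μ : ℕ → Set α) (Q : Set α),
        Disjoint (NSet A B₁ ν μ cT ∩ Q) (NSet A B₁ ν μ cF ∩ Q) := by
      intro α A ν μ Q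
      rw [Set.disjoint_left]
      rintro u ⟨hu1, _⟩ ⟨hu2, _⟩
      have e1 := hu1.2.2 ⟨Y, hY⟩
      have e2 := hu2.2.2 ⟨Y, hY⟩
      rw [hcT] at e1
      rw [hcF] at e2
      simp only [if_pos rfl, if_true, iff_true, iff_false] at e1 e2
      exact e2 e1
    have hpiece : ∀ c' : Fin B₂ → Prop,
        eqC q (NSet A₁ B₁ ν₁ μ₁ c' ∩ {u | u ∈ V₁ ↔ c ⟨Y, hY⟩})
          (NSet A₂ B₁ ν₂ μ₂ c' ∩ {u | u ∈ V₂ ↔ c ⟨Y, hY⟩}) := by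
      intro c'
      by_cases hcY : c ⟨Y, hY⟩
      · have q1 : {u : U₁ | u ∈ V₁ ↔ c ⟨Y, hY⟩} = V₁ :=
          Set.ext fun u => ⟨fun hh => hh.2 hcY, fun hh => iff_of_true hh hcY⟩
        have q2 : {u : U₂ | u ∈ V₂ ↔ c ⟨Y, hY⟩} = V₂ :=
          Set.ext fun u => ⟨fun hh => hh.2 hcY, fun hh => iff_of_true hh hcY⟩
        rw [q1, q2, Set.inter_comm _ V₂, hF1 c']
        exact hW1 c'
      · have q1 : NSet A₁ B₁ ν₁ μ₁ c' ∩ {u : U₁ | u ∈ V₁ ↔ c ⟨Y, hY⟩} =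
            NSet A₁ B₁ ν₁ μ₁ c' \ V₁ := by
          ext u
          simp only [Set.mem_inter_iff, Set.mem_diff, Set.mem_setOf_eq]
          exact and_congr Iff.rfl ⟨fun hh hu => hcY (hh.1 hu), fun hh => iff_of_false hh hcY⟩
        have q2 : NSet A₂ B₁ ν₂ μ₂ c' ∩ {u : U₂ | u ∈ V₂ ↔ c ⟨Y, hY⟩} =
            NSet A₂ B₁ ν₂ μ₂ c' \ W c' := by
          ext u
          simp only [Set.mem_inter_iff, Set.mem_diff, Set.mem_setOf_eq]
          constructor
          · rintro ⟨hN, hh⟩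
            exact ⟨hN, fun hu => hcY (hh.1 (Or.inr (Or.inr ⟨c', hu⟩)))⟩
          · rintro ⟨hN, hh⟩
            refine ⟨hN, iff_of_false (fun hu => ?_) hcY⟩
            have hWu : u ∈ V₂ ∩ NSet A₂ B₁ ν₂ μ₂ c' := ⟨hu, hN⟩
            rw [hF1 c'] at hWu
            exact hh hWu
        rw [q1, q2]
        exact hW2 c'
    exact eqC_union (hpiece cT) (hpiece cF) (hNdisj A₁ ν₁ μ₁ _) (hNdisj A₂ ν₂ μ₂ _)


/-- Bound on all first-order variables occurring in a formula. -/
def bFO : MSO Sg → ℕ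
  | .rel _ args => Finset.univ.sup fun i => Sum.elim Nat.succ (fun _ => 0) (args i)
  | .eq t₁ t₂ => max (Sum.elim Nat.succ (fun _ => 0) t₁) (Sum.elim Nat.succ (fun _ => 0) t₂)
  | .mem t _ => Sum.elim Nat.succ (fun _ => 0) t
  | .not φ => bFO φ
  | .and φ ψ => max (bFO φ) (bFO ψ)
  | .exFO y φ => max (y+1) (bFO φ)
  | .exSO _ φ => bFO φ

/-- Bound on all set variables occurring in a formula. -/
def bSO : MSO Sg → ℕ
  | .rel _ _ => 0
  | .eq _ _ => 0
  | .mem _ X => X + 1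
  | .not φ => bSO φ
  | .and φ ψ => max (bSO φ) (bSO ψ)
  | .exFO _ φ => bSO φ
  | .exSO Y φ => max (Y+1) (bSO φ)

lemma term_match {C : Corr σ₁ σ₂ A₁ A₂} {q B₁ B₂ : ℕ} {ν₁ : ℕ → U₁} {μ₁ : ℕ → Set U₁}
    {ν₂ : ℕ → U₂} {μ₂ : ℕ → Set U₂} (h : Inv C q B₁ B₂ ν₁ μ₁ ν₂ μ₂) (t : ℕ ⊕ Sg.Const)
    (ht : Sum.elim Nat.succ (fun _ => 0) t ≤ B₁) :
    (∃ hh : termVal σ₁ ν₁ t ∈ A₁, (C.e ⟨termVal σ₁ ν₁ t, hh⟩ : U₂) = termVal σ₂ ν₂ t) ∨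
      (termVal σ₁ ν₁ t ∉ A₁ ∧ termVal σ₂ ν₂ t ∉ A₂) := by
  cases t with
  | inl n => exact h.pt n (by simpa using ht)
  | inr c => exact Or.inl ⟨C.const_mem₁ c, C.e_const c⟩

lemma match_eq_iff {C : Corr σ₁ σ₂ A₁ A₂} {u₁ u₁' : U₁} {u₂ u₂' : U₂}
    (hm : (∃ hh : u₁ ∈ A₁, (C.e ⟨u₁, hh⟩ : U₂) = u₂) ∨ (u₁ ∉ A₁ ∧ u₂ ∉ A₂))
    (hm' : (∃ hh : u₁' ∈ A₁, (C.e ⟨u₁', hh⟩ : U₂) = u₂') ∨ (u₁' ∉ A₁ ∧ u₂' ∉ A₂))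
    (hA : u₁' ∈ A₁) : (u₁ = u₁' ↔ u₂ = u₂') := by
  obtain ⟨hA', he'⟩ := hm'.resolve_right (fun hc => hc.1 hA)
  constructor
  · intro hh
    obtain ⟨hA1, he1⟩ := hm.resolve_right (fun hc => hc.1 (hh ▸ hA))
    rw [← he1, ← he']
    exact congrArg Subtype.val (congrArg C.e (Subtype.ext hh))
  · intro hh
    have hu2A : u₂ ∈ A₂ := by rw [hh, ← he']; exact (C.e ⟨u₁', hA'⟩).2
    obtain ⟨hA1, he1⟩ := hm.resolve_right (fun hc => hc.2 hu2A)
    have hee : C.e ⟨u₁, hA1⟩ = C.e ⟨u₁', hA'⟩ := Subtype.ext (by rw [he1, he', hh])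
    exact congrArg Subtype.val (C.e.injective hee)

lemma match_eq_iff' {C : Corr σ₁ σ₂ A₁ A₂} {u₁ u₁' : U₁} {u₂ u₂' : U₂}
    (hm : (∃ hh : u₁ ∈ A₁, (C.e ⟨u₁, hh⟩ : U₂) = u₂) ∨ (u₁ ∉ A₁ ∧ u₂ ∉ A₂))
    (hm' : (∃ hh : u₁' ∈ A₁, (C.e ⟨u₁', hh⟩ : U₂) = u₂') ∨ (u₁' ∉ A₁ ∧ u₂' ∉ A₂))
    (hA : u₁ ∈ A₁) : (u₁ = u₁' ↔ u₂ = u₂') := by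
  rw [@eq_comm _ u₁, @eq_comm _ u₂]
  exact match_eq_iff hm' hm hA

end Main

theorem sat_transfer {Sg : Signature} (φ : MSO Sg) :
    ∀ {U₁ U₂ : Type} {σ₁ : Interp Sg U₁} {σ₂ : Interp Sg U₂} {A₁ : Set U₁} {A₂ : Set U₂}
      (C : Corr σ₁ σ₂ A₁ A₂) (q B₁ B₂ : ℕ), φ.qr ≤ q → bFO φ ≤ B₁ → bSO φ ≤ B₂ →
      ∀ (ν₁ : ℕ → U₁) (μ₁ : ℕ → Set U₁) (ν₂ : ℕ → U₂) (μ₂ : ℕ → Set U₂),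
      Inv C q B₁ B₂ ν₁ μ₁ ν₂ μ₂ → (MSOSat σ₁ ν₁ μ₁ φ ↔ MSOSat σ₂ ν₂ μ₂ φ) := by
  induction φ with
  | rel R args =>
    intro U₁ U₂ σ₁ σ₂ A₁ A₂ C q B₁ B₂ hq hB1 hB2 ν₁ μ₁ ν₂ μ₂ h
    simp only [MSOSat]
    have hargs : ∀ i, Sum.elim Nat.succ (fun _ => 0) (args i) ≤ B₁ := fun i => by
      simp only [bFO] at hB1
      exact le_trans (Finset.le_sup (f := fun i => Sum.elim Nat.succ (fun _ => 0) (args i))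
        (Finset.mem_univ i)) hB1
    constructor
    · intro hsat
      have hAi : ∀ i, termVal σ₁ ν₁ (args i) ∈ A₁ := C.rel_mem₁ R _ hsat
      have hrel := (C.e_rel R (fun i => ⟨termVal σ₁ ν₁ (args i), hAi i⟩)).1 hsat
      have hfe : (fun i => (C.e ⟨termVal σ₁ ν₁ (args i), hAi i⟩ : U₂)) =
          fun i => termVal σ₂ ν₂ (args i) := funext fun i => by
        rcases term_match h (args i) (hargs i) with ⟨hh, he⟩ | ⟨h1, _⟩
        · exact he
        · exact absurd (hAi i) h1
      rw [← hfe]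
      exact hrel
    · intro hsat
      have hAi2 : ∀ i, termVal σ₂ ν₂ (args i) ∈ A₂ := C.rel_mem₂ R _ hsat
      have hmatch : ∀ i, ∃ hh : termVal σ₁ ν₁ (args i) ∈ A₁,
          (C.e ⟨termVal σ₁ ν₁ (args i), hh⟩ : U₂) = termVal σ₂ ν₂ (args i) := fun i => by
        rcases term_match h (args i) (hargs i) with hm | ⟨_, h2⟩
        · exact hm
        · exact absurd (hAi2 i) h2
      choose hA1 he using hmatch
      apply (C.e_rel R (fun i => ⟨termVal σ₁ ν₁ (args i), hA1 i⟩)).2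
      rw [show (fun i => (C.e ⟨termVal σ₁ ν₁ (args i), hA1 i⟩ : U₂)) =
        fun i => termVal σ₂ ν₂ (args i) from funext he]
      exact hsat
  | eq t₁ t₂ =>
    intro U₁ U₂ σ₁ σ₂ A₁ A₂ C q B₁ B₂ hq hB1 hB2 ν₁ μ₁ ν₂ μ₂ h
    simp only [MSOSat]
    have ht₁ : Sum.elim Nat.succ (fun _ => 0) t₁ ≤ B₁ := le_trans (le_max_left _ _) hB1
    have ht₂ : Sum.elim Nat.succ (fun _ => 0) t₂ ≤ B₁ := le_trans (le_max_right _ _) hB1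
    match t₁, t₂ with
    | Sum.inl n, Sum.inl m =>
      exact h.eqv n (by simpa using ht₁) m (by simpa using ht₂)
    | Sum.inl n, Sum.inr c =>
      exact match_eq_iff (term_match h (Sum.inl n) ht₁) (term_match h (Sum.inr c) ht₂)
        (C.const_mem₁ c)
    | Sum.inr c, t₂ =>
      exact match_eq_iff' (term_match h (Sum.inr c) ht₁) (term_match h t₂ ht₂)
        (C.const_mem₁ c)
  | mem t X =>
    intro U₁ U₂ σ₁ σ₂ A₁ A₂ C q B₁ B₂ hq hB1 hB2 ν₁ μ₁ ν₂ μ₂ h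
    simp only [MSOSat]
    have hX : X < B₂ := lt_of_lt_of_le (Nat.lt_succ_self X) hB2
    match t with
    | Sum.inl n => exact h.memv n (by simpa [SingleTypeAux.bFO] using hB1) X hX
    | Sum.inr c =>
      have := h.memA X hX ⟨σ₁.const c, C.const_mem₁ c⟩
      rwa [C.e_const c] at this
  | not φ ih =>
    intro U₁ U₂ σ₁ σ₂ A₁ A₂ C q B₁ B₂ hq hB1 hB2 ν₁ μ₁ ν₂ μ₂ h
    simp only [MSOSat]
    exact not_congr (ih C q B₁ B₂ hq hB1 hB2 ν₁ μ₁ ν₂ μ₂ h)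
  | and φ ψ ihφ ihψ =>
    intro U₁ U₂ σ₁ σ₂ A₁ A₂ C q B₁ B₂ hq hB1 hB2 ν₁ μ₁ ν₂ μ₂ h
    simp only [MSOSat]
    exact and_congr
      (ihφ C q B₁ B₂ (le_trans (le_max_left _ _) hq) (le_trans (le_max_left _ _) hB1)
        (le_trans (le_max_left _ _) hB2) ν₁ μ₁ ν₂ μ₂ h)
      (ihψ C q B₁ B₂ (le_trans (le_max_right _ _) hq) (le_trans (le_max_right _ _) hB1)
        (le_trans (le_max_right _ _) hB2) ν₁ μ₁ ν₂ μ₂ h)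
  | exFO y φ ih =>
    intro U₁ U₂ σ₁ σ₂ A₁ A₂ C q B₁ B₂ hq hB1 hB2 ν₁ μ₁ ν₂ μ₂ h
    simp only [MSOSat]
    have hy : y < B₁ := lt_of_lt_of_le (Nat.lt_succ_self y) (le_trans (le_max_left _ _) hB1)
    have hB1' : bFO φ ≤ B₁ := le_trans (le_max_right _ _) hB1
    have h' : Inv C (φ.qr + 1) B₁ B₂ ν₁ μ₁ ν₂ μ₂ := h.mono hq
    constructor
    · rintro ⟨u₁, hsat⟩
      obtain ⟨u₂, hInv⟩ := pickFO h' y hy u₁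
      exact ⟨u₂, (ih C φ.qr B₁ B₂ le_rfl hB1' hB2 _ _ _ _ hInv).1 hsat⟩
    · rintro ⟨u₂, hsat⟩
      obtain ⟨u₁, hInv⟩ := pickFO h'.swap y hy u₂
      exact ⟨u₁, (ih C.swap φ.qr B₁ B₂ le_rfl hB1' hB2 _ _ _ _ hInv).1 hsat⟩
  | exSO Y φ ih =>
    intro U₁ U₂ σ₁ σ₂ A₁ A₂ C q B₁ B₂ hq hB1 hB2 ν₁ μ₁ ν₂ μ₂ h
    simp only [MSOSat]
    have hY : Y < B₂ := lt_of_lt_of_le (Nat.lt_succ_self Y) (le_trans (le_max_left _ _) hB2)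
    have hB2' : bSO φ ≤ B₂ := le_trans (le_max_right _ _) hB2
    have h' : Inv C (φ.qr + 1) B₁ B₂ ν₁ μ₁ ν₂ μ₂ := h.mono hq
    constructor
    · rintro ⟨V₁, hsat⟩
      obtain ⟨V₂, hInv⟩ := pickSO h' Y hY V₁
      exact ⟨V₂, (ih C φ.qr B₁ B₂ le_rfl hB1 hB2' _ _ _ _ hInv).1 hsat⟩
    · rintro ⟨V₂, hsat⟩
      obtain ⟨V₁, hInv⟩ := pickSO h'.swap Y hY V₂
      exact ⟨V₁, (ih C.swap φ.qr B₁ B₂ le_rfl hB1 hB2' _ _ _ _ hInv).1 hsat⟩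


end SingleTypeAux



lemma termVal_congr {Sg : Signature} {U : Type} {σ : Interp Sg U} {ν ν' : ℕ → U}
    (t : ℕ ⊕ Sg.Const) (h : ∀ n, t = Sum.inl n → ν n = ν' n) :
    termVal σ ν t = termVal σ ν' t := by
  cases t with
  | inl n => exact h n rfl
  | inr c => rfl

/-- MSO satisfaction only depends on the values of the free variables. -/
lemma MSOSat_congr {Sg : Signature} {U : Type} {σ : Interp Sg U} (φ : MSO Sg) :
    ∀ (ν ν' : ℕ → U) (μ μ' : ℕ → Set U),
    (∀ n ∈ φ.fvFO, ν n = ν' n) → (∀ X ∈ φ.fvSO, μ X = μ' X) →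
    (MSOSat σ ν μ φ ↔ MSOSat σ ν' μ' φ) := by
  induction φ with
  | rel R args =>
    intro ν ν' μ μ' hν hμ
    simp only [MSOSat]
    have : (fun i => termVal σ ν (args i)) = fun i => termVal σ ν' (args i) :=
      funext fun i => termVal_congr _ (fun n hn => hν n ⟨i, hn⟩)
    rw [this]
  | eq t₁ t₂ =>
    intro ν ν' μ μ' hν hμ
    simp only [MSOSat]
    rw [termVal_congr (σ := σ) t₁ (fun n hn => hν n (Or.inl hn)),
       termVal_congr (σ := σ) t₂ (fun n hn => hν n (Or.inr hn))]
  | mem t X =>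
    intro ν ν' μ μ' hν hμ
    simp only [MSOSat]
    rw [termVal_congr (σ := σ) t (fun n hn => hν n hn), hμ X rfl]
  | not φ ih =>
    intro ν ν' μ μ' hν hμ
    simp only [MSOSat]
    exact not_congr (ih ν ν' μ μ' hν hμ)
  | and φ ψ ihφ ihψ =>
    intro ν ν' μ μ' hν hμ
    simp only [MSOSat]
    exact and_congr
      (ihφ ν ν' μ μ' (fun n hn => hν n (Or.inl hn)) (fun X hX => hμ X (Or.inl hX)))
      (ihψ ν ν' μ μ' (fun n hn => hν n (Or.inr hn)) (fun X hX => hμ X (Or.inr hX)))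
  | exFO y φ ih =>
    intro ν ν' μ μ' hν hμ
    simp only [MSOSat]
    refine exists_congr fun v => ih _ _ μ μ' (fun n hn => ?_) hμ
    by_cases hny : n = y
    · subst hny; simp only [Function.update_self]
    · rw [Function.update_of_ne hny, Function.update_of_ne hny]
      exact hν n ⟨hn, hny⟩
  | exSO Y φ ih =>
    intro ν ν' μ μ' hν hμ
    simp only [MSOSat]
    refine exists_congr fun V => ih ν ν' _ _ hν (fun X hX => ?_)
    by_cases hXY : X = Y
    · subst hXY; simp only [Function.update_self]
    · rw [Function.update_of_ne hXY, Function.update_of_ne hXY]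
      exact hμ X ⟨hX, hXY⟩

lemma domSet_finite {Sg : Signature} {U : Type} (σ : Interp Sg U) : σ.domSet.Finite := by
  haveI := Sg.finRel
  haveI := Sg.finConst
  refine Set.Finite.union ?_ (Set.finite_range _)
  have hsub : RelSet σ ⊆ ⋃ R : Sg.Rel, ⋃ g ∈ σ.rel R, Set.range g := by
    rintro u ⟨R, g, hg, i, rfl⟩
    exact Set.mem_iUnion.2 ⟨R, Set.mem_iUnion.2 ⟨g, Set.mem_iUnion.2 ⟨hg, ⟨i, rfl⟩⟩⟩⟩
  exact Set.Finite.subset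
    (Set.finite_iUnion fun R => Set.Finite.biUnion (σ.rel_finite R)
      fun g _ => Set.finite_range g) hsub


/-- Lemma `single-type`: a structure `S` with infinite universe
has the same `r`-type as the finite structure `S^{2^r}` obtained by restricting
the universe to `Dom(σ)` together with `2^r` pairwise distinct fresh elements. -/
theorem single_type {Sg : Signature} {U : Type} [Infinite U] (r : ℕ)
    (σ : Interp Sg U) (v : Fin (2^r) → U)
    (hv : Function.Injective v)
    (hfresh : ∀ j, v j ∉ σ.domSet) :
    σ.typeAt r =
      (σ.restrict (σ.domSet ∪ Set.range v)
        (fun c => Or.inl (Or.inr ⟨c, rfl⟩))).typeAt r := by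
  classical
  set A : Set U := σ.domSet with hA
  set V : Set U := σ.domSet ∪ Set.range v with hV
  set σ' : Interp Sg ↥V := σ.restrict V (fun c => Or.inl (Or.inr ⟨c, rfl⟩)) with hσ'
  have hAV : A ⊆ V := Set.subset_union_left
  set A₂ : Set ↥V := {x : ↥V | (x : U) ∈ A} with hA₂
  let e : ↥A ≃ ↥A₂ :=
    { toFun := fun a => ⟨⟨a.1, hAV a.2⟩, a.2⟩
      invFun := fun x => ⟨x.1.1, x.2⟩
      left_inv := fun a => rfl
      right_inv := fun x => Subtype.ext (Subtype.ext rfl) }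
  let C : SingleTypeAux.Corr σ σ' A A₂ :=
    { e := e
      const_mem₁ := fun c => Or.inr ⟨c, rfl⟩
      const_mem₂ := fun c => Or.inr ⟨c, rfl⟩
      e_const := fun c => rfl
      rel_mem₁ := fun R g hg i => Or.inl ⟨R, g, hg, i, rfl⟩
      rel_mem₂ := fun R g hg i => Or.inl ⟨R, fun j => (g j : U), hg, i, rfl⟩
      e_rel := fun R g => Iff.rfl }
  have hpos : 0 < 2^r := Nat.pow_pos (n := r) (by norm_num)
  set j0 : Fin (2^r) := ⟨0, hpos⟩ with hj0
  set ν₁0 : ℕ → U := fun _ => v j0 with hν₁0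
  set ν₂0 : ℕ → ↥V := fun _ => (⟨v j0, Or.inr ⟨j0, rfl⟩⟩ : ↥V) with hν₂0
  set μ₁0 : ℕ → Set U := fun _ => (∅ : Set U) with hμ₁0
  set μ₂0 : ℕ → Set ↥V := fun _ => (∅ : Set ↥V) with hμ₂0
  have hInv : ∀ B₁ B₂ : ℕ, SingleTypeAux.Inv C r B₁ B₂ ν₁0 μ₁0 ν₂0 μ₂0 := by
    intro B₁ B₂
    refine ⟨?_, ?_, ?_, ?_, ?_⟩
    · intro n _
      exact Or.inr ⟨hfresh j0, hfresh j0⟩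
    · intro n _ m _
      exact iff_of_true rfl rfl
    · intro n _ X _
      exact iff_of_false (Set.notMem_empty _) (Set.notMem_empty _)
    · intro X _ a
      exact iff_of_false (Set.notMem_empty _) (Set.notMem_empty _)
    · intro c
      by_cases hc : ∀ X : Fin B₂, ¬ c X
      · refine Or.inr ⟨?_, ?_⟩
        · have hsub : {u : U | u ∉ A ∧ u ≠ v j0} ⊆ SingleTypeAux.NSet A B₁ ν₁0 μ₁0 c :=
            fun u hu => ⟨hu.1, fun n _ hh => hu.2 hh.symm,
              fun X => iff_of_false (Set.notMem_empty _) (hc X)⟩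
          have heq2 : {u : U | u ∉ A ∧ u ≠ v j0} = (A ∪ {v j0})ᶜ := by
            ext u; simp only [Set.mem_setOf_eq, Set.compl_union, Set.mem_inter_iff,
              Set.mem_compl_iff, Set.mem_singleton_iff]
          have hinf : {u : U | u ∉ A ∧ u ≠ v j0}.Infinite := by
            rw [heq2]
            exact Set.Finite.infinite_compl ((domSet_finite σ).union (Set.finite_singleton _))
          rw [(hinf.mono hsub).encard_eq]
          exact le_top
        · set S : Set ↥V := (fun j : Fin (2^r) => (⟨v j, Or.inr ⟨j, rfl⟩⟩ : ↥V)) ''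
            ((Set.univ : Set (Fin (2^r))) \ {j0}) with hS
          have hSsub : S ⊆ SingleTypeAux.NSet A₂ B₁ ν₂0 μ₂0 c := by
            rintro x ⟨j, ⟨_, hj⟩, rfl⟩
            refine ⟨hfresh j, ?_, fun X => iff_of_false (Set.notMem_empty _) (hc X)⟩
            intro n _ hn
            apply hj
            have hvv : v j0 = v j := congrArg Subtype.val hn
            simp only [Set.mem_singleton_iff]
            exact (hv hvv).symm
          have hinj : Function.Injective
              (fun j : Fin (2^r) => (⟨v j, Or.inr ⟨j, rfl⟩⟩ : ↥V)) :=
            fun a b hab => hv (congrArg Subtype.val hab)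
          have hcard : S.encard = ((Set.univ : Set (Fin (2^r))) \ {j0}).encard :=
            hinj.injOn.encard_image
          have huniv : ((Set.univ : Set (Fin (2^r))) \ {j0}).encard + 1 = ((2^r : ℕ) : ℕ∞) := by
            rw [Set.encard_diff_singleton_add_one (Set.mem_univ j0), Set.encard_univ]
            simp
          have h1 : ((2^r - 1 : ℕ) : ℕ∞) + 1 = ((2^r : ℕ) : ℕ∞) := by
            have : (2^r - 1 : ℕ) + 1 = 2^r := Nat.succ_pred_eq_of_pos hpos
            exact_mod_cast this
          have hle : ((2^r - 1 : ℕ) : ℕ∞) ≤ S.encard := by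
            rw [hcard]
            exact le_of_eq (WithTop.add_right_cancel (by simp : (1:ℕ∞) ≠ ⊤)
              (h1.trans huniv.symm))
          exact le_trans hle (Set.encard_mono hSsub)
      · push_neg at hc
        obtain ⟨X, hX⟩ := hc
        refine Or.inl ?_
        have h1 : SingleTypeAux.NSet A B₁ ν₁0 μ₁0 c = ∅ :=
          Set.eq_empty_iff_forall_notMem.2 fun u hu =>
            Set.notMem_empty u ((hu.2.2 X).2 hX)
        have h2 : SingleTypeAux.NSet A₂ B₁ ν₂0 μ₂0 c = ∅ :=
          Set.eq_empty_iff_forall_notMem.2 fun u hu =>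
            Set.notMem_empty u ((hu.2.2 X).2 hX)
        rw [h1, h2, Set.encard_empty, Set.encard_empty]
  ext φ
  simp only [Interp.typeAt, Set.mem_setOf_eq]
  constructor
  · rintro ⟨hs, hq, hm⟩
    refine ⟨hs, hq, fun ν' μ' => ?_⟩
    have h1 := hm ν₁0 μ₁0
    have h2 := (SingleTypeAux.sat_transfer φ C r (SingleTypeAux.bFO φ) (SingleTypeAux.bSO φ)
      hq le_rfl le_rfl ν₁0 μ₁0 ν₂0 μ₂0 (hInv _ _)).1 h1
    exact (MSOSat_congr φ ν₂0 ν' μ₂0 μ'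
      (fun n hn => absurd (hs.1 ▸ hn) (Set.notMem_empty n))
      (fun X hX => absurd (hs.2 ▸ hX) (Set.notMem_empty X))).1 h2
  · rintro ⟨hs, hq, hm⟩
    refine ⟨hs, hq, fun ν' μ' => ?_⟩
    have h1 := hm ν₂0 μ₂0
    have h2 := (SingleTypeAux.sat_transfer φ C r (SingleTypeAux.bFO φ) (SingleTypeAux.bSO φ)
      hq le_rfl le_rfl ν₁0 μ₁0 ν₂0 μ₂0 (hInv _ _)).2 h1
    exact (MSOSat_congr φ ν₁0 ν' μ₁0 μ'
      (fun n hn => absurd (hs.1 ▸ hn) (Set.notMem_empty n))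
      (fun X hX => absurd (hs.2 ▸ hX) (Set.notMem_empty X))).1 h2
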